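/- arXiv:math/9903111 — 3 statements merged into one kernel-verified Lean document; each statement's English description precedes it below -/
import Mathlib

section
/- If H is a subgroup of A₆ isomorphic to A₅ that acts transitively on {1,...,6}, and K is the stabilizer of a point in A₆, then H ∩ K is a subgroup of order 10 (a dihedral group D₅). -/
lemma no_order_ten (σ : Equiv.Perm (Fin 6)) : orderOf σ ≠ 10 := by
  intro h10
  have hlcm : σ.cycleType.lcm = 10 := by rw [Equiv.Perm.lcm_cycleType, h10]
  have hsum : σ.cycleType.sum ≤ 6 := by
    rw [Equiv.Perm.sum_cycleType]
    simpa using (Finset.card_le_univ σ.support)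
  have h5 : (5 : ℕ) ∈ σ.cycleType := by
    by_contra hc
    have : σ.cycleType.lcm ∣ 2 := by
      apply Multiset.lcm_dvd.mpr
      intro c hc'
      have hd : c ∣ 10 := hlcm ▸ Multiset.dvd_lcm hc'
      have h2 : 2 ≤ c := Equiv.Perm.two_le_of_mem_cycleType hc'
      have hle : c ≤ 6 := le_trans (Multiset.le_sum_of_mem hc') hsum
      interval_cases c <;> simp_all <;> omega
    rw [hlcm] at this
    norm_num at this
  have hrw : σ.cycleType = 5 ::ₘ σ.cycleType.erase 5 := (Multiset.cons_erase h5).symm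
  have hrest : σ.cycleType.erase 5 = 0 := by
    by_contra hne
    obtain ⟨d, hd⟩ := Multiset.exists_mem_of_ne_zero hne
    have h2 : 2 ≤ d := Equiv.Perm.two_le_of_mem_cycleType (Multiset.mem_of_mem_erase hd)
    have := Multiset.le_sum_of_mem hd
    rw [hrw] at hsum
    simp [Multiset.sum_cons] at hsum
    omega
  rw [hrw, hrest] at hlcm
  simp [Multiset.fold_singleton, lcm, Nat.lcm] at hlcm


lemma dihedral_of_card_ten {G : Type*} [Group G] [Finite G] (hG : Nat.card G = 10)
    (hno : ∀ g : G, orderOf g ≠ 10) : Nonempty (G ≃* DihedralGroup 5) := by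
  have h5f : Fact (Nat.Prime 5) := ⟨by norm_num⟩
  have h2f : Fact (Nat.Prime 2) := ⟨by norm_num⟩
  obtain ⟨a, ha⟩ := exists_prime_orderOf_dvd_card' (G := G) 5 (by rw [hG]; norm_num)
  obtain ⟨b, hb⟩ := exists_prime_orderOf_dvd_card' (G := G) 2 (by rw [hG]; norm_num)
  have h5a : a ^ 5 = 1 := by rw [← ha]; exact pow_orderOf_eq_one a
  have hbb : b * b = 1 := by
    have := pow_orderOf_eq_one b
    rwa [hb, pow_two] at this
  have hbinv : b⁻¹ = b := by
    rw [inv_eq_iff_mul_eq_one, hbb]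
  set P := Subgroup.zpowers a with hP
  have hcardP : Nat.card P = 5 := by rw [hP, Nat.card_zpowers, ha]
  have hidx : P.index = 2 := by
    have := Subgroup.card_mul_index P
    rw [hcardP, hG] at this
    omega
  have hmem : b * a * b ∈ P := by
    rw [Subgroup.mul_mem_iff_of_index_two hidx, Subgroup.mul_mem_iff_of_index_two hidx]
    have : a ∈ P := Subgroup.mem_zpowers a
    tauto
  obtain ⟨m, hm0⟩ := hmem
  have hm : a ^ m = b * a * b := hm0
  have hz5 : a ^ (5 : ℤ) = 1 := by
    rw [show (5:ℤ) = (5:ℕ) from rfl, zpow_natCast, h5a]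
  have hsq : a ^ (m * m) = a := by
    calc a ^ (m * m) = (a ^ m) ^ m := by rw [zpow_mul]
    _ = (b * a * b) ^ m := by rw [hm]
    _ = (b * a * b⁻¹) ^ m := by rw [hbinv]
    _ = b * a ^ m * b⁻¹ := conj_zpow
    _ = b * (b * a * b) * b⁻¹ := by rw [hm]
    _ = (b * b) * a * (b * b⁻¹) := by group
    _ = a := by rw [hbb, mul_inv_cancel, one_mul, mul_one]
  have hdvd : (5 : ℤ) ∣ (m - 1) * (m + 1) := by
    have h1 : a ^ (m * m - 1) = 1 := by
      rw [zpow_sub, hsq, zpow_one, mul_inv_cancel]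
    have := orderOf_dvd_iff_zpow_eq_one.mpr h1
    rw [ha] at this
    have h5' : (5 : ℤ) ∣ m * m - 1 := by exact_mod_cast this
    convert h5' using 1
    ring
  have hprime : Prime (5 : ℤ) := by norm_num
  have hrel : b * a * b = a⁻¹ := by
    rcases hprime.dvd_mul.mp hdvd with hd | hd
    · exfalso
      have ham : a ^ m = a := by
        obtain ⟨c, hc⟩ := hd
        have hmc : m = 5 * c + 1 := by linarith
        rw [hmc, zpow_add, zpow_one, zpow_mul, hz5, one_zpow, one_mul]
      have hcomm : Commute a b := by
        have hba : b * a * b = a := by rw [← hm, ham]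
        have : b * a = a * b := by
          calc b * a = (b * a * b) * b := by rw [mul_assoc, hbb, mul_one]
          _ = a * b := by rw [hba]
        exact this.symm
      have := Commute.orderOf_mul_eq_mul_orderOf_of_coprime hcomm
        (by rw [ha, hb]; norm_num)
      rw [ha, hb] at this
      exact hno _ this
    · have ham : a ^ m = a⁻¹ := by
        obtain ⟨c, hc⟩ := hd
        have hmc : m = 5 * c - 1 := by linarith
        rw [hmc, zpow_sub, zpow_one, zpow_mul, hz5, one_zpow, one_mul]
      rw [← hm, ham]
  -- now build the isomorphism
  have hPadd : ∀ m n : ZMod 5, a ^ (m + n).val = a ^ m.val * a ^ n.val := by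
    intro m n
    rw [← pow_add, pow_eq_pow_iff_modEq, ha, ZMod.val_add]
    exact Nat.mod_modEq _ 5
  have hneg : ∀ m : ZMod 5, a ^ (-m).val = (a ^ m.val)⁻¹ := by
    intro m
    refine eq_inv_of_mul_eq_one_left ?_
    rw [← hPadd, neg_add_cancel]
    simp
  have hconj : ∀ m : ZMod 5, b * a ^ m.val * b = a ^ (-m).val := by
    intro m
    calc b * a ^ m.val * b = b * a ^ m.val * b⁻¹ := by rw [hbinv]
    _ = (b * a * b⁻¹) ^ m.val := conj_pow.symm
    _ = (a⁻¹) ^ m.val := by rw [hbinv, hrel]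
    _ = (a ^ m.val)⁻¹ := inv_pow a _
    _ = a ^ (-m).val := (hneg m).symm
  let f : DihedralGroup 5 → G := fun x => match x with
    | .r i => a ^ i.val
    | .sr i => b * a ^ i.val
  let φ : DihedralGroup 5 →* G :=
    { toFun := f
      map_one' := by simp only [DihedralGroup.one_def, f, ZMod.val_zero, pow_zero]
      map_mul' := by
        rintro (i | i) (j | j) <;>
          simp only [DihedralGroup.r_mul_r, DihedralGroup.r_mul_sr, DihedralGroup.sr_mul_r,
            DihedralGroup.sr_mul_sr, f]
        · exact hPadd i j
        · have hcomm : a ^ i.val * b = b * a ^ (-i).val := by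
            calc a ^ i.val * b = b * (b * a ^ i.val * b) := by
                  rw [← mul_assoc, ← mul_assoc, hbb, one_mul]
            _ = b * a ^ (-i).val := by rw [hconj]
          rw [← mul_assoc, hcomm, mul_assoc, ← hPadd, sub_eq_neg_add]
        · rw [hPadd, mul_assoc]
        · symm
          calc b * a ^ i.val * (b * a ^ j.val) = (b * a ^ i.val * b) * a ^ j.val := by
                rw [mul_assoc, mul_assoc, mul_assoc]
          _ = a ^ (-i).val * a ^ j.val := by rw [hconj]
          _ = a ^ (j - i).val := by rw [← hPadd, sub_eq_neg_add, add_comm] }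
  have hinj : Function.Injective φ := by
    refine (injective_iff_map_eq_one φ).mpr ?_
    rintro (i | i) hx
    · have hx' : a ^ i.val = 1 := hx
      have hdvd := orderOf_dvd_of_pow_eq_one hx'
      rw [ha] at hdvd
      have h0 : i.val = 0 := Nat.eq_zero_of_dvd_of_lt hdvd (ZMod.val_lt i)
      have hi : i = 0 := by rwa [← ZMod.val_eq_zero]
      rw [hi, ← DihedralGroup.one_def]
    · exfalso
      have hx' : b * a ^ i.val = 1 := hx
      have hbeq : b = (a ^ i.val)⁻¹ := by
        rw [eq_inv_iff_mul_eq_one]; exact hx'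
      have hb5 : b ^ 5 = 1 := by
        rw [hbeq, inv_pow, ← pow_mul, mul_comm i.val 5, pow_mul, h5a, one_pow, inv_one]
      have := orderOf_dvd_of_pow_eq_one hb5
      rw [hb] at this
      norm_num at this
  have hbij : Function.Bijective φ := by
    rw [Nat.bijective_iff_injective_and_card]
    exact ⟨hinj, by rw [DihedralGroup.nat_card, hG]⟩
  exact ⟨(MulEquiv.ofBijective φ hbij).symm⟩


/-- If `H` is a subgroup of `A₆` isomorphic to `A₅` which acts transitively on the six
points, and `K` is the stabilizer of a point, then `H ∩ K` has order 10 and is a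
dihedral group `D₅`. -/
theorem A5_subgroup_meet_point_stabilizer
    (H : Subgroup (alternatingGroup (Fin 6)))
    (hiso : Nonempty (H ≃* alternatingGroup (Fin 5)))
    (htrans : ∀ a b : Fin 6, ∃ h ∈ H, h • a = b) (k : Fin 6) :
    Nat.card ↥(H ⊓ MulAction.stabilizer (alternatingGroup (Fin 6)) k) = 10 ∧
    Nonempty (↥(H ⊓ MulAction.stabilizer (alternatingGroup (Fin 6)) k) ≃*
      DihedralGroup 5) := by
  have hcardH : Nat.card H = 60 := by
    have h1 : Nat.card H = Nat.card (alternatingGroup (Fin 5)) :=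
      Nat.card_congr hiso.some.toEquiv
    have h2 : 2 * Fintype.card (alternatingGroup (Fin 5)) = Fintype.card (Equiv.Perm (Fin 5)) :=
      two_mul_card_alternatingGroup
    rw [Fintype.card_perm, Fintype.card_fin, ← Nat.card_eq_fintype_card,
      show (5:ℕ).factorial = 120 from rfl] at h2
    rw [h1]
    omega
  have horbit : MulAction.orbit H k = Set.univ := by
    refine Set.eq_univ_iff_forall.mpr fun b => ?_
    obtain ⟨h, hH, hhb⟩ := htrans k b
    exact ⟨⟨h, hH⟩, hhb⟩
  have hcardorbit : Nat.card (MulAction.orbit H k) = 6 := by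
    rw [horbit]
    simpa using Nat.card_congr (Equiv.Set.univ (Fin 6))
  have hos : Nat.card (MulAction.orbit H k) * Nat.card (MulAction.stabilizer H k)
      = Nat.card H := by
    rw [← Nat.card_prod]
    exact Nat.card_congr (MulAction.orbitProdStabilizerEquivGroup H k)
  have hstab : Nat.card (MulAction.stabilizer H k) = 10 := by
    rw [hcardorbit, hcardH] at hos
    omega
  set S := MulAction.stabilizer (alternatingGroup (Fin 6)) k with hS
  have hid : MulAction.stabilizer H k = (H ⊓ S).subgroupOf H := by
    rw [inf_comm, Subgroup.inf_subgroupOf_right]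
    ext x
    exact Iff.rfl
  have hcard : Nat.card ↥(H ⊓ S) = 10 := by
    calc Nat.card ↥(H ⊓ S)
        = Nat.card ((H ⊓ S).subgroupOf H) :=
          (Nat.card_congr (Subgroup.subgroupOfEquivOfLe inf_le_left).toEquiv).symm
      _ = 10 := by rw [← hid]; exact hstab
  refine ⟨hcard, dihedral_of_card_ten hcard ?_⟩
  intro g hg
  apply no_order_ten ((alternatingGroup (Fin 6)).subtype ((H ⊓ S).subtype g))
  rw [orderOf_injective _ (alternatingGroup (Fin 6)).subtype_injective,
    orderOf_injective _ (H ⊓ S).subtype_injective]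
  exact hg
end

section
/- The six quadratic forms C̄₁(x) = x₁² + x₂² + x₃², C̄₂(x) = x₁² + ρ²x₂² + ρx₃² (with ρ = e^{2πi/3}), and C̄₃,...,C̄₆ obtained from C̄₂ by applying powers of the Valentiner generator P, are linearly independent and hence span the six-dimensional space of ternary quadratic forms over ℂ. -/
open MvPolynomial

noncomputable section

/-- `ρ = e^{2πi/3}`. -/
def ρ : ℂ := Complex.exp (2 * Real.pi * Complex.I / 3)

/-- `η = (3 + √15 i)/4`. -/
def η : ℂ := (3 + Real.sqrt 15 * Complex.I) / 4

/-- The six "barred" icosahedral conic forms of the Valentiner group, as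
quadratic forms (homogeneous ternary polynomials of degree 2) over `ℂ`. -/
def barConic : Fin 6 → MvPolynomial (Fin 3) ℂ :=
  ![X 0 ^ 2 + X 1 ^ 2 + X 2 ^ 2,
    X 0 ^ 2 + C (ρ ^ 2) * X 1 ^ 2 + C ρ * X 2 ^ 2,
    C η * (C (η / 3) * (X 0 ^ 2 + C ρ * X 1 ^ 2 + C (ρ ^ 2) * X 2 ^ 2) +
      (C (ρ ^ 2) * (X 0 * X 1) + C ρ * (X 0 * X 2) - X 1 * X 2)),
    C η * (C (η / 3) * (C ρ * X 0 ^ 2 + C (ρ ^ 2) * X 1 ^ 2 + X 2 ^ 2) +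
      (-(X 0 * X 1) + C (ρ ^ 2) * (X 0 * X 2) + C ρ * (X 1 * X 2))),
    C η * (C (η / 3) * (C ρ * X 0 ^ 2 + C (ρ ^ 2) * X 1 ^ 2 + X 2 ^ 2) -
      (X 0 * X 1 + C (ρ ^ 2) * (X 0 * X 2) + C ρ * (X 1 * X 2))),
    C η * (C (η / 3) * (X 0 ^ 2 + C ρ * X 1 ^ 2 + C (ρ ^ 2) * X 2 ^ 2) +
      (C (ρ ^ 2) * (X 0 * X 1) - C ρ * (X 0 * X 2) + X 1 * X 2))]

/-! Writing `S = x₁² + ρx₂² + ρ²x₃²`, the forms `C̄₁, C̄₂, S` are the discrete Fourier transform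
of `(x₁², x₂², x₃²)` at the cube root of unity `ρ`, so they span the squares. In `C̄₃, …, C̄₆` the
square parts are multiples of `S` and `ρS`, so sums and differences of these four forms isolate
the three mixed monomials and then `S`. Hence the span of the `C̄ᵢ` contains all six quadratic
monomials and is the whole space of quadratic forms; six vectors spanning a six-dimensional
space are linearly independent. -/

namespace MvPolynomial

variable {σ R : Type*} [CommSemiring R]

theorem homogeneousSubmodule_two_eq_span_X_mul_X :
    homogeneousSubmodule σ R 2 = Submodule.span R (Set.range fun ij : σ × σ ↦ X ij.1 * X ij.2) := by
  rw [← homogeneousSubmodule_one_pow, homogeneousSubmodule_one_eq_span_X, pow_two,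
    Submodule.span_mul_span, ← Set.image2_mul, Set.image2_range]

variable (R) in
def quadMonomial : Fin 6 → MvPolynomial (Fin 3) R :=
  ![X 0 ^ 2, X 1 ^ 2, X 2 ^ 2, X 0 * X 1, X 0 * X 2, X 1 * X 2]

open Submodule in
theorem span_quadMonomial :
    span R (Set.range (quadMonomial R)) = homogeneousSubmodule (Fin 3) R 2 := by
  rw [homogeneousSubmodule_two_eq_span_X_mul_X]
  apply le_antisymm <;> rw [span_le, Set.range_subset_iff]
  · intro k
    fin_cases k
    exacts [subset_span ⟨(0, 0), (sq _).symm⟩, subset_span ⟨(1, 1), (sq _).symm⟩,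
      subset_span ⟨(2, 2), (sq _).symm⟩, subset_span ⟨(0, 1), rfl⟩, subset_span ⟨(0, 2), rfl⟩,
      subset_span ⟨(1, 2), rfl⟩]
  · rintro ⟨i, j⟩
    fin_cases i <;> fin_cases j
    exacts [subset_span ⟨0, sq _⟩, subset_span ⟨3, rfl⟩, subset_span ⟨4, rfl⟩,
      subset_span ⟨3, mul_comm _ _⟩, subset_span ⟨1, sq _⟩, subset_span ⟨5, rfl⟩,
      subset_span ⟨4, mul_comm _ _⟩, subset_span ⟨5, mul_comm _ _⟩, subset_span ⟨2, sq _⟩]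

theorem linearIndependent_quadMonomial : LinearIndependent R (quadMonomial R) := by
  let exponent : Fin 6 → Fin 3 → ℕ :=
    ![![2, 0, 0], ![0, 2, 0], ![0, 0, 2], ![1, 1, 0], ![1, 0, 1], ![0, 1, 1]]
  have h_inj : Function.Injective exponent := by decide
  convert (basisMonomials (Fin 3) R).linearIndependent.comp _
    (Finsupp.equivFunOnFinite.symm.injective.comp h_inj)
  funext k
  fin_cases k <;>
    simp [quadMonomial, exponent, monomial_eq, Finsupp.prod_fintype, Fin.prod_univ_three]

end MvPolynomial

theorem isPrimitiveRoot_rho : IsPrimitiveRoot ρ 3 := by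
  simpa [ρ] using Complex.isPrimitiveRoot_exp 3 (by norm_num)

theorem rho_sq_add_rho_add_one : ρ ^ 2 + ρ + 1 = 0 := by
  have h := isPrimitiveRoot_rho.geom_sum_eq_zero (by norm_num)
  simp only [Finset.sum_range_succ, Finset.sum_range_zero] at h
  linear_combination h

theorem C_rho_pow_three {σ : Type*} : (C ρ : MvPolynomial σ ℂ) ^ 3 = 1 := by
  rw [← map_pow, isPrimitiveRoot_rho.pow_eq_one, map_one]

theorem C_rho_sq_add_C_rho_add_one {σ : Type*} : (C ρ : MvPolynomial σ ℂ) ^ 2 + C ρ + 1 = 0 := by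
  simpa using congrArg (C : ℂ → MvPolynomial σ ℂ) rho_sq_add_rho_add_one

theorem eta_ne_zero : η ≠ 0 := by
  intro h
  simpa [η] using congrArg Complex.re h

theorem barConic_isHomogeneous (k : Fin 6) : (barConic k).IsHomogeneous 2 := by
  have hX (i j : Fin 3) : (X i * X j : MvPolynomial (Fin 3) ℂ).IsHomogeneous 2 :=
    (isHomogeneous_X ℂ i).mul (isHomogeneous_X ℂ j)
  fin_cases k <;> simp only [barConic, Fin.reduceFinMk, Fin.zero_eta, Fin.mk_one, Matrix.cons_val,
      Matrix.cons_val_zero, Matrix.cons_val_one] <;>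
    apply_rules (transparency := .reducible) [IsHomogeneous.add, IsHomogeneous.sub,
      IsHomogeneous.neg, IsHomogeneous.C_mul, isHomogeneous_X_pow]

/-- The quadric `S` of `C̄₃ = η((η/3) S + …)`; the square part of `C̄₄` and `C̄₅` is `(η²/3) ρS`. -/
def twistedSquareSum : MvPolynomial (Fin 3) ℂ := X 0 ^ 2 + C ρ * X 1 ^ 2 + C (ρ ^ 2) * X 2 ^ 2

theorem smul_X_zero_mul_X_one_eq :
    (4 * η) • (X 0 * X 1) = ρ • (barConic 2 + barConic 5) - (barConic 3 + barConic 4) := by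
  simp only [barConic, smul_eq_C_mul, map_mul, map_ofNat, map_pow, Matrix.cons_val]
  linear_combination (-2 * C η * (C (η / 3) * X 2 ^ 2 + X 0 * X 1)) * C_rho_pow_three

theorem smul_X_zero_mul_X_two_eq :
    (4 * η * ρ ^ 2) • (X 0 * X 2) = ρ • (barConic 2 - barConic 5) + (barConic 3 - barConic 4) := by
  simp only [barConic, smul_eq_C_mul, map_mul, map_ofNat, map_pow, Matrix.cons_val]
  ring

theorem smul_X_one_mul_X_two_eq :
    (4 * η * ρ) • (X 1 * X 2) = (barConic 3 - barConic 4) - ρ • (barConic 2 - barConic 5) := by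
  simp only [barConic, smul_eq_C_mul, map_mul, map_ofNat, map_pow, Matrix.cons_val]
  ring

theorem smul_twistedSquareSum_eq :
    (2 * η * (η / 3)) • twistedSquareSum =
      barConic 2 + barConic 5 - (2 * η * ρ ^ 2) • (X 0 * X 1) := by
  simp only [barConic, twistedSquareSum, smul_eq_C_mul, map_mul, map_ofNat, map_pow,
    Matrix.cons_val]
  ring

theorem three_smul_X_zero_sq_eq :
    (3 : ℂ) • X 0 ^ 2 = barConic 0 + barConic 1 + twistedSquareSum := by
  simp only [barConic, twistedSquareSum, smul_eq_C_mul, map_ofNat, map_pow, Matrix.cons_val_zero,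
    Matrix.cons_val_one]
  linear_combination (-(X 1 ^ 2 + X 2 ^ 2)) * C_rho_sq_add_C_rho_add_one

theorem three_smul_X_one_sq_eq :
    (3 : ℂ) • X 1 ^ 2 = barConic 0 + ρ • barConic 1 + ρ ^ 2 • twistedSquareSum := by
  simp only [barConic, twistedSquareSum, smul_eq_C_mul, map_ofNat, map_pow, Matrix.cons_val_zero,
    Matrix.cons_val_one]
  linear_combination (-(X 0 ^ 2 + X 2 ^ 2)) * C_rho_sq_add_C_rho_add_one -
    (2 * X 1 ^ 2 + C ρ * X 2 ^ 2) * C_rho_pow_three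

theorem three_smul_X_two_sq_eq :
    (3 : ℂ) • X 2 ^ 2 = barConic 0 + ρ ^ 2 • barConic 1 + ρ • twistedSquareSum := by
  simp only [barConic, twistedSquareSum, smul_eq_C_mul, map_ofNat, map_pow, Matrix.cons_val_zero,
    Matrix.cons_val_one]
  linear_combination (-(X 0 ^ 2 + X 1 ^ 2)) * C_rho_sq_add_C_rho_add_one -
    (2 * X 2 ^ 2 + C ρ * X 1 ^ 2) * C_rho_pow_three

theorem quadMonomial_mem_span_barConic (k : Fin 6) :
    quadMonomial ℂ k ∈ Submodule.span ℂ (Set.range barConic) := by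
  set V := Submodule.span ℂ (Set.range barConic)
  have hC (i : Fin 6) : barConic i ∈ V := Submodule.subset_span ⟨i, rfl⟩
  have hρ : ρ ≠ 0 := isPrimitiveRoot_rho.ne_zero (by norm_num)
  have hη : 4 * η ≠ 0 := mul_ne_zero (by norm_num) eta_ne_zero
  have h3 : (3 : ℂ) ≠ 0 := three_ne_zero
  have h01 : X 0 * X 1 ∈ V := (V.smul_mem_iff hη).1 <| by
    rw [smul_X_zero_mul_X_one_eq]
    exact V.sub_mem (V.smul_mem _ (V.add_mem (hC 2) (hC 5))) (V.add_mem (hC 3) (hC 4))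
  have h02 : X 0 * X 2 ∈ V := (V.smul_mem_iff (mul_ne_zero hη (pow_ne_zero 2 hρ))).1 <| by
    rw [smul_X_zero_mul_X_two_eq]
    exact V.add_mem (V.smul_mem _ (V.sub_mem (hC 2) (hC 5))) (V.sub_mem (hC 3) (hC 4))
  have h12 : X 1 * X 2 ∈ V := (V.smul_mem_iff (mul_ne_zero hη hρ)).1 <| by
    rw [smul_X_one_mul_X_two_eq]
    exact V.sub_mem (V.sub_mem (hC 3) (hC 4)) (V.smul_mem _ (V.sub_mem (hC 2) (hC 5)))
  have hS : twistedSquareSum ∈ V :=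
    (V.smul_mem_iff (show 2 * η * (η / 3) ≠ 0 by simp [eta_ne_zero])).1 <| by
      rw [smul_twistedSquareSum_eq]
      exact V.sub_mem (V.add_mem (hC 2) (hC 5)) (V.smul_mem _ h01)
  have h00 : X 0 ^ 2 ∈ V := (V.smul_mem_iff h3).1 <| by
    rw [three_smul_X_zero_sq_eq]
    exact V.add_mem (V.add_mem (hC 0) (hC 1)) hS
  have h11 : X 1 ^ 2 ∈ V := (V.smul_mem_iff h3).1 <| by
    rw [three_smul_X_one_sq_eq]
    exact V.add_mem (V.add_mem (hC 0) (V.smul_mem _ (hC 1))) (V.smul_mem _ hS)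
  have h22 : X 2 ^ 2 ∈ V := (V.smul_mem_iff h3).1 <| by
    rw [three_smul_X_two_sq_eq]
    exact V.add_mem (V.add_mem (hC 0) (V.smul_mem _ (hC 1))) (V.smul_mem _ hS)
  fin_cases k
  exacts [h00, h11, h22, h01, h02, h12]

/-- The six icosahedral conic forms `C̄₁, …, C̄₆` are linearly independent over `ℂ`
and hence span the six-dimensional space of ternary quadratic forms. -/
theorem barConic_linearIndependent_and_spans :
    LinearIndependent ℂ barConic ∧
    Submodule.span ℂ (Set.range barConic) =
      MvPolynomial.homogeneousSubmodule (Fin 3) ℂ 2 := by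
  have hspan : Submodule.span ℂ (Set.range barConic) = homogeneousSubmodule (Fin 3) ℂ 2 := by
    apply le_antisymm
    · exact Submodule.span_le.2 (Set.range_subset_iff.2 barConic_isHomogeneous)
    · rw [← span_quadMonomial]
      exact Submodule.span_le.2 (Set.range_subset_iff.2 quadMonomial_mem_span_barConic)
  refine ⟨?_, hspan⟩
  rw [linearIndependent_iff_card_eq_finrank_span, Set.finrank, hspan, ← span_quadMonomial,
    finrank_span_eq_card linearIndependent_quadMonomial]

end
end

section
/- If G is a finite subgroup of GL₃(ℂ) projecting onto a simple projective group [G] with kernel generated by the scalar ρ = e^{2πi/3}, and G has no subgroup of order |[G]|, then every homogeneous polynomial F that is relatively invariant under G (i.e., F∘T⁻¹ = α(T)·F for a multiplicative character α) is absolutely G-invariant. -/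
open MvPolynomial

noncomputable section

/-- The substitution action of a matrix `M` on ternary polynomials:
`(matAct M F)(x) = F(Mx)`. -/
def matAct (M : Matrix (Fin 3) (Fin 3) ℂ) :
    MvPolynomial (Fin 3) ℂ →ₐ[ℂ] MvPolynomial (Fin 3) ℂ :=
  MvPolynomial.aeval fun i => ∑ j, C (M i j) * X j

/-- If `G` is a finite subgroup of `GL₃(ℂ)` projecting onto a simple projective
group `Q` with kernel generated by the scalar `ρ = e^{2πi/3}`, and `G` has no
subgroup of order `|Q|`, then every homogeneous polynomial `F` that is relatively
invariant under `G` (i.e. `F∘T⁻¹ = α(T)·F` for a multiplicative character `α`)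
is absolutely `G`-invariant. -/
theorem relative_invariant_is_absolute_invariant
    (G : Subgroup (GL (Fin 3) ℂ)) [Finite G]
    (Qt : Type*) [Group Qt] [IsSimpleGroup Qt]
    (π : G →* Qt) (hπ : Function.Surjective π)
    (z : G)
    (hz : ((z : GL (Fin 3) ℂ) : Matrix (Fin 3) (Fin 3) ℂ) =
      Complex.exp (2 * Real.pi * Complex.I / 3) • (1 : Matrix (Fin 3) (Fin 3) ℂ))
    (hker : π.ker = Subgroup.zpowers z)
    (hno : ∀ H : Subgroup G, Nat.card H ≠ Nat.card Qt)
    (d : ℕ) (F : MvPolynomial (Fin 3) ℂ) (hF : F.IsHomogeneous d)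
    (α : G →* ℂˣ)
    (hrel : ∀ T : G,
      matAct (((T : GL (Fin 3) ℂ)⁻¹ : GL (Fin 3) ℂ) : Matrix (Fin 3) (Fin 3) ℂ) F =
        (α T : ℂ) • F) :
    ∀ T : G,
      matAct (((T : GL (Fin 3) ℂ)⁻¹ : GL (Fin 3) ℂ) : Matrix (Fin 3) (Fin 3) ℂ) F = F := by
  have hQtFin : Finite Qt := Finite.of_surjective π hπ
  -- ρ^3 = 1
  have h3 : (Complex.exp (2 * Real.pi * Complex.I / 3)) ^ 3 = 1 := by
    rw [← Complex.exp_nat_mul]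
    rw [show ((3 : ℕ) : ℂ) * (2 * Real.pi * Complex.I / 3) = 2 * Real.pi * Complex.I by
      push_cast; ring]
    exact Complex.exp_two_pi_mul_I
  -- z^3 = 1
  have hz3 : z ^ 3 = 1 := by
    apply Subtype.ext
    apply Units.ext
    show (((z ^ 3 : G) : GL (Fin 3) ℂ) : Matrix (Fin 3) (Fin 3) ℂ) = _
    push_cast
    rw [hz, smul_pow, h3, one_smul, one_pow]
  -- z ≠ 1
  have hzne : z ≠ 1 := by
    intro h
    rw [h] at hz
    have hρ : Complex.exp (2 * Real.pi * Complex.I / 3) = 1 := by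
      have h00 := congrFun (congrFun hz 0) 0
      simpa [Matrix.smul_apply, Matrix.one_apply] using h00.symm
    obtain ⟨n, hn⟩ := Complex.exp_eq_one_iff.mp hρ
    have h2pi : (2 * (Real.pi : ℂ) * Complex.I) ≠ 0 := by
      simp [Real.pi_ne_zero, Complex.I_ne_zero, Complex.ofReal_ne_zero]
    have hc : (2 * (Real.pi : ℂ) * Complex.I) * 1
        = (2 * (Real.pi : ℂ) * Complex.I) * ((n : ℂ) * 3) := by
      linear_combination 3 * hn
    have h13 : (1 : ℂ) = (n : ℂ) * 3 := mul_left_cancel₀ h2pi hc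
    have : (1 : ℤ) = n * 3 := by exact_mod_cast h13
    omega
  have fact3 : Fact (Nat.Prime 3) := ⟨by norm_num⟩
  have hord : orderOf z = 3 := orderOf_eq_prime hz3 hzne
  have hkercard : Nat.card π.ker = 3 := by
    rw [hker, Nat.card_zpowers, hord]
  have hG : Nat.card G = 3 * Nat.card Qt := by
    rw [Subgroup.card_eq_card_quotient_mul_card_subgroup π.ker, hkercard,
      Nat.card_congr (QuotientGroup.quotientKerEquivOfSurjective π hπ).toEquiv]
    ring
  suffices hTop : α.ker = ⊤ by
    intro T
    have hT1 : α T = 1 := MonoidHom.mem_ker.mp (hTop ▸ Subgroup.mem_top T)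
    rw [hrel T, hT1]
    simp
  have hnorm : (α.ker.map π).Normal := α.normal_ker.map π hπ
  rcases IsSimpleGroup.eq_bot_or_eq_top_of_normal _ hnorm with hbot | htop
  · -- α.ker maps to ⊥: Qt abelian, prime order, Cauchy contradicts hno
    exfalso
    have hle : α.ker ≤ π.ker := by
      intro k hk
      have hmem : π k ∈ α.ker.map π := ⟨k, hk, rfl⟩
      rw [hbot] at hmem
      simpa [MonoidHom.mem_ker] using hmem
    have hcomm : ∀ a b : Qt, a * b = b * a := by
      intro a b
      obtain ⟨x, rfl⟩ := hπ a
      obtain ⟨y, rfl⟩ := hπ b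
      have h1 : (y * x)⁻¹ * (x * y) ∈ α.ker := by
        rw [MonoidHom.mem_ker, map_mul, map_inv, map_mul, map_mul,
          mul_comm (α x) (α y)]
        group
      have h2 : π ((y * x)⁻¹ * (x * y)) = 1 := hle h1
      rw [map_mul, map_inv, inv_mul_eq_one, map_mul, map_mul] at h2
      exact h2.symm
    letI : CommGroup Qt := { (inferInstance : Group Qt) with mul_comm := hcomm }
    have hp : Nat.Prime (Nat.card Qt) := IsSimpleGroup.prime_card
    have : Fintype G := Fintype.ofFinite G
    have : Fact (Nat.Prime (Nat.card Qt)) := ⟨hp⟩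
    obtain ⟨g, hg⟩ := exists_prime_orderOf_dvd_card (G := G) (Nat.card Qt)
      (by rw [← Nat.card_eq_fintype_card, hG]; exact ⟨3, by ring⟩)
    exact hno (Subgroup.zpowers g) (by rw [Nat.card_zpowers, hg])
  · -- α.ker maps onto Qt
    set f := π.comp α.ker.subtype with hf
    have hfsurj : Function.Surjective f := by
      intro q
      have : q ∈ α.ker.map π := htop ▸ Subgroup.mem_top q
      obtain ⟨k, hk, rfl⟩ := this
      exact ⟨⟨k, hk⟩, rfl⟩
    have hcard : Nat.card α.ker = Nat.card f.ker * Nat.card Qt := by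
      rw [Subgroup.card_eq_card_quotient_mul_card_subgroup f.ker,
        Nat.card_congr (QuotientGroup.quotientKerEquivOfSurjective f hfsurj).toEquiv]
      ring
    have hdvd : Nat.card f.ker ∣ 3 := by
      have hinj : Function.Injective α.ker.subtype := Subgroup.subtype_injective _
      have he : Nat.card f.ker = Nat.card (f.ker.map α.ker.subtype) :=
        Nat.card_congr (Subgroup.equivMapOfInjective f.ker _ hinj).toEquiv
      have hle2 : f.ker.map α.ker.subtype ≤ π.ker := by
        rintro x ⟨k, hk, rfl⟩
        exact hk
      have hdd := Subgroup.card_dvd_of_le hle2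
      rw [hkercard] at hdd
      rw [he]
      exact hdd
    rcases (Nat.prime_three.eq_one_or_self_of_dvd _ hdvd) with h1 | h1
    · exact absurd (by rw [hcard, h1, one_mul]) (hno α.ker)
    · exact Subgroup.eq_top_of_card_eq _ (by rw [hcard, h1, ← hG])


end
end
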